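/- Let n ≥ 1, let r be a complex number with |r| < 1, and let A = A_r(R_0, R_1, …, R_{n-1}) be the r-circulant matrix on the first n terms of the generalized tribonacci sequence. Then |r|·√(∑_{k=0}^{n-1} R_k²) ≤ ‖A‖₂ ≤ √( n·[4·R_{n-1}·R_n − 4·R_0·R_1 − (R_n − R_{n-2})² + (R_{-2} + R_0)² + 4·R_0²]/4 ). -/

import Mathlib

/-!
Every entry of an `r`-circulant matrix in position `(i, j)` is `x_k` or `r * x_k` with
`k = (j - i) mod n`, so each row and each column runs through `x_0, …, x_{n-1}` with some entries
scaled by `r`. For `‖r‖ ≤ 1` the spectral norm is therefore at least the Euclidean norm of a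
column, `≥ ‖r‖ (∑ ‖x_k‖²)^{1/2}`, and at most the Frobenius norm, `≤ (n ∑ ‖x_k‖²)^{1/2}`. For the
tribonacci sequence, `∑_{k<n} R_k²` has the closed form in the statement, by induction on `n`.
-/

theorem tribonacci_sum_range_sq (R : ℤ → ℝ)
    (hrec : ∀ m : ℤ, R m = R (m - 1) + R (m - 2) + R (m - 3)) (m : ℕ) :
    ∑ k ∈ Finset.range m, R k ^ 2 =
      (4 * R (m - 1) * R m - 4 * R 0 * R 1 - (R m - R (m - 2)) ^ 2
        + (R (-2) + R 0) ^ 2 + 4 * R 0 ^ 2) / 4 := by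
  induction m with
  | zero =>
    have h1 : R 1 = R 0 + R (-1) + R (-2) := hrec 1
    rw [Finset.sum_range_zero, Nat.cast_zero, zero_sub, zero_sub, h1]
    ring
  | succ p ih =>
    have hp : R (p + 1) = R p + R (p - 1) + R (p - 2) := by
      rw [hrec]; ring_nf
    rw [Finset.sum_range_succ, ih, Nat.cast_succ, add_sub_cancel_right,
      show (p : ℤ) + 1 - 2 = p - 1 by ring, hp]
    ring

namespace Matrix

variable {𝕜 ι : Type*} [RCLike 𝕜] [Fintype ι] [DecidableEq ι]

theorem norm_toEuclideanCLM_apply_sq_le (A : Matrix ι ι 𝕜) (x : EuclideanSpace 𝕜 ι) (i : ι) :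
    ‖toEuclideanCLM (𝕜 := 𝕜) A x i‖ ^ 2 ≤ (∑ j, ‖A i j‖ ^ 2) * ‖x‖ ^ 2 := by
  have hx : ‖x‖ ^ 2 = ∑ j, ‖x j‖ ^ 2 := EuclideanSpace.norm_sq_eq x
  calc ‖toEuclideanCLM (𝕜 := 𝕜) A x i‖ ^ 2 = ‖∑ j, A i j * x j‖ ^ 2 := rfl
    _ ≤ (∑ j, ‖A i j‖ * ‖x j‖) ^ 2 := by
        gcongr
        exact (norm_sum_le _ _).trans_eq (by simp only [norm_mul])
    _ ≤ (∑ j, ‖A i j‖ ^ 2) * ‖x‖ ^ 2 := hx ▸ Finset.sum_mul_sq_le_sq_mul_sq _ _ _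

theorem norm_toEuclideanCLM_le_sqrt_sum_norm_sq (A : Matrix ι ι 𝕜) :
    ‖toEuclideanCLM (𝕜 := 𝕜) A‖ ≤ √(∑ i, ∑ j, ‖A i j‖ ^ 2) := by
  refine ContinuousLinearMap.opNorm_le_bound _ (Real.sqrt_nonneg _) fun x => ?_
  rw [← Real.sqrt_sq (norm_nonneg x), ← Real.sqrt_mul (by positivity),
    ← Real.sqrt_sq (norm_nonneg (toEuclideanCLM (𝕜 := 𝕜) A x)), EuclideanSpace.norm_sq_eq,
    Finset.sum_mul]
  exact Real.sqrt_le_sqrt (Finset.sum_le_sum fun i _ => norm_toEuclideanCLM_apply_sq_le A x i)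

theorem sqrt_sum_norm_sq_col_le_norm_toEuclideanCLM (A : Matrix ι ι 𝕜) (j : ι) :
    √(∑ i, ‖A i j‖ ^ 2) ≤ ‖toEuclideanCLM (𝕜 := 𝕜) A‖ := by
  have hcol : toEuclideanCLM (𝕜 := 𝕜) A (EuclideanSpace.single j 1) =
      WithLp.toLp 2 (fun i => A i j) := by
    ext i
    simp [EuclideanSpace.single, mulVec_single]
  calc √(∑ i, ‖A i j‖ ^ 2) = ‖toEuclideanCLM (𝕜 := 𝕜) A (EuclideanSpace.single j 1)‖ := by
        rw [hcol, EuclideanSpace.norm_eq]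
    _ ≤ ‖toEuclideanCLM (𝕜 := 𝕜) A‖ * ‖EuclideanSpace.single j (1 : 𝕜)‖ :=
        ContinuousLinearMap.le_opNorm _ _
    _ = ‖toEuclideanCLM (𝕜 := 𝕜) A‖ := by simp

def rCirculant (n : ℕ) (r : 𝕜) (x : ℤ → 𝕜) : Matrix (Fin n) (Fin n) 𝕜 :=
  of fun i j =>
    if (i : ℕ) ≤ (j : ℕ) then x ((j : ℤ) - (i : ℤ)) else r * x ((n : ℤ) + (j : ℤ) - (i : ℤ))

variable {n : ℕ} {r : 𝕜} {x : ℤ → 𝕜}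

theorem rCirculant_apply (i j : Fin n) :
    rCirculant n r x i j =
      if i ≤ j then x ((j - i : Fin n) : ℕ) else r * x ((j - i : Fin n) : ℕ) := by
  simp only [rCirculant, of_apply, Fin.le_def]
  split_ifs with h
  · rw [Fin.coe_sub_iff_le.mpr (Fin.le_def.mpr h)]
    push_cast [h]; rfl
  · rw [Fin.coe_sub_iff_lt.mpr (by omega)]
    congr 2; omega

theorem norm_rCirculant_apply_sq_le (hr : ‖r‖ ≤ 1) (i j : Fin n) :
    ‖rCirculant n r x i j‖ ^ 2 ≤ ‖x ((j - i : Fin n) : ℕ)‖ ^ 2 := by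
  rw [rCirculant_apply]
  split_ifs
  · rfl
  · rw [norm_mul, mul_pow]
    exact mul_le_of_le_one_left (by positivity) (pow_le_one₀ (norm_nonneg r) hr)

theorem mul_norm_sq_le_norm_rCirculant_apply_sq (hr : ‖r‖ ≤ 1) (i j : Fin n) :
    ‖r‖ ^ 2 * ‖x ((j - i : Fin n) : ℕ)‖ ^ 2 ≤ ‖rCirculant n r x i j‖ ^ 2 := by
  rw [rCirculant_apply]
  split_ifs
  · exact mul_le_of_le_one_left (by positivity) (pow_le_one₀ (norm_nonneg r) hr)
  · rw [norm_mul, mul_pow]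

theorem sum_norm_rCirculant_row_sq_le (hr : ‖r‖ ≤ 1) (i : Fin n) :
    ∑ j, ‖rCirculant n r x i j‖ ^ 2 ≤ ∑ k ∈ Finset.range n, ‖x k‖ ^ 2 := by
  have : NeZero n := ⟨i.pos.ne'⟩
  calc ∑ j, ‖rCirculant n r x i j‖ ^ 2 ≤ ∑ j, ‖x ((j - i : Fin n) : ℕ)‖ ^ 2 :=
        Finset.sum_le_sum fun j _ => norm_rCirculant_apply_sq_le hr i j
    _ = ∑ k : Fin n, ‖x (k : ℕ)‖ ^ 2 := (Equiv.subRight i).sum_comp fun k => ‖x (k : ℕ)‖ ^ 2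
    _ = ∑ k ∈ Finset.range n, ‖x k‖ ^ 2 := Fin.sum_univ_eq_sum_range (fun k => ‖x k‖ ^ 2) n

theorem mul_sum_le_sum_norm_rCirculant_col_sq (hr : ‖r‖ ≤ 1) (j : Fin n) :
    ‖r‖ ^ 2 * ∑ k ∈ Finset.range n, ‖x k‖ ^ 2 ≤ ∑ i, ‖rCirculant n r x i j‖ ^ 2 := by
  have : NeZero n := ⟨j.pos.ne'⟩
  calc ‖r‖ ^ 2 * ∑ k ∈ Finset.range n, ‖x k‖ ^ 2
        = ∑ i, ‖r‖ ^ 2 * ‖x ((j - i : Fin n) : ℕ)‖ ^ 2 := by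
        rw [← Fin.sum_univ_eq_sum_range (fun k => ‖x k‖ ^ 2) n, Finset.mul_sum,
          ← (Equiv.subLeft j).sum_comp (fun k : Fin n => ‖r‖ ^ 2 * ‖x (k : ℕ)‖ ^ 2)]
        rfl
    _ ≤ ∑ i, ‖rCirculant n r x i j‖ ^ 2 :=
        Finset.sum_le_sum fun i _ => mul_norm_sq_le_norm_rCirculant_apply_sq hr i j

theorem norm_toEuclideanCLM_rCirculant_le (hr : ‖r‖ ≤ 1) :
    ‖toEuclideanCLM (𝕜 := 𝕜) (rCirculant n r x)‖ ≤ √(n * ∑ k ∈ Finset.range n, ‖x k‖ ^ 2) := by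
  refine (norm_toEuclideanCLM_le_sqrt_sum_norm_sq _).trans (Real.sqrt_le_sqrt ?_)
  calc ∑ i, ∑ j, ‖rCirculant n r x i j‖ ^ 2 ≤ ∑ _i : Fin n, ∑ k ∈ Finset.range n, ‖x k‖ ^ 2 :=
        Finset.sum_le_sum fun i _ => sum_norm_rCirculant_row_sq_le hr i
    _ = n * ∑ k ∈ Finset.range n, ‖x k‖ ^ 2 := by simp

theorem mul_sqrt_le_norm_toEuclideanCLM_rCirculant (hr : ‖r‖ ≤ 1) :
    ‖r‖ * √(∑ k ∈ Finset.range n, ‖x k‖ ^ 2) ≤ ‖toEuclideanCLM (𝕜 := 𝕜) (rCirculant n r x)‖ := by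
  obtain rfl | hn := n.eq_zero_or_pos
  · simp
  calc ‖r‖ * √(∑ k ∈ Finset.range n, ‖x k‖ ^ 2)
        = √(‖r‖ ^ 2 * ∑ k ∈ Finset.range n, ‖x k‖ ^ 2) := by
          rw [Real.sqrt_mul (sq_nonneg _), Real.sqrt_sq (norm_nonneg r)]
    _ ≤ √(∑ i, ‖rCirculant n r x i ⟨0, hn⟩‖ ^ 2) :=
        Real.sqrt_le_sqrt (mul_sum_le_sum_norm_rCirculant_col_sq hr _)
    _ ≤ ‖toEuclideanCLM (𝕜 := 𝕜) (rCirculant n r x)‖ :=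
        sqrt_sum_norm_sq_col_le_norm_toEuclideanCLM _ _

end Matrix

theorem rcirculant_tribonacci_specNorm_bounds_small_r_general
    (R : ℤ → ℝ)
    (hrec : ∀ m : ℤ, R m = R (m - 1) + R (m - 2) + R (m - 3))
    (n : ℕ) (r : ℂ) (hr : ‖r‖ < 1)
    (A : Matrix (Fin n) (Fin n) ℂ)
    (hA : ∀ i j : Fin n, A i j =
      if (i : ℕ) ≤ (j : ℕ) then ((R ((j : ℤ) - (i : ℤ)) : ℝ) : ℂ)
      else r * ((R ((n : ℤ) + (j : ℤ) - (i : ℤ)) : ℝ) : ℂ)) :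
    ‖r‖ * Real.sqrt (∑ k ∈ Finset.range n, R (k : ℤ) ^ 2) ≤
        ‖Matrix.toEuclideanCLM (𝕜 := ℂ) A‖ ∧
      ‖Matrix.toEuclideanCLM (𝕜 := ℂ) A‖ ≤
        Real.sqrt ((n : ℝ) *
          ((4 * R ((n : ℤ) - 1) * R (n : ℤ) - 4 * R 0 * R 1
            - (R (n : ℤ) - R ((n : ℤ) - 2)) ^ 2 + (R (-2) + R 0) ^ 2
            + 4 * R 0 ^ 2) / 4)) := by
  have hA' : A = Matrix.rCirculant n r (fun k => (R k : ℂ)) := Matrix.ext hA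
  have hsum :
      ∑ k ∈ Finset.range n, ‖((R k : ℝ) : ℂ)‖ ^ 2 = ∑ k ∈ Finset.range n, R k ^ 2 := by
    simp only [Complex.norm_real, Real.norm_eq_abs, sq_abs]
  rw [hA', ← tribonacci_sum_range_sq R hrec n, ← hsum]
  exact ⟨Matrix.mul_sqrt_le_norm_toEuclideanCLM_rCirculant (x := fun k => (R k : ℂ)) hr.le,
    Matrix.norm_toEuclideanCLM_rCirculant_le (x := fun k => (R k : ℂ)) hr.le⟩

/-- bounds for the spectral norm of an `r`-circulant matrix
on the generalized tribonacci sequence, when `|r| < 1`. -/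
theorem rcirculant_tribonacci_specNorm_bounds_small_r
    (a b c : ℤ) (ha : 0 < a) (hb : 0 < b) (hc : 0 < c)
    (R : ℤ → ℝ) (hR0 : R 0 = (a : ℝ)) (hR1 : R 1 = (b : ℝ)) (hR2 : R 2 = (c : ℝ))
    (hrec : ∀ m : ℤ, R m = R (m - 1) + R (m - 2) + R (m - 3))
    (n : ℕ) (hn : 1 ≤ n) (r : ℂ) (hr : ‖r‖ < 1)
    (A : Matrix (Fin n) (Fin n) ℂ)
    (hA : ∀ i j : Fin n, A i j =
      if (i : ℕ) ≤ (j : ℕ) then ((R ((j : ℤ) - (i : ℤ)) : ℝ) : ℂ)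
      else r * ((R ((n : ℤ) + (j : ℤ) - (i : ℤ)) : ℝ) : ℂ)) :
    ‖r‖ * Real.sqrt (∑ k ∈ Finset.range n, R (k : ℤ) ^ 2) ≤
        ‖Matrix.toEuclideanCLM (𝕜 := ℂ) A‖ ∧
      ‖Matrix.toEuclideanCLM (𝕜 := ℂ) A‖ ≤
        Real.sqrt ((n : ℝ) *
          ((4 * R ((n : ℤ) - 1) * R (n : ℤ) - 4 * R 0 * R 1
            - (R (n : ℤ) - R ((n : ℤ) - 2)) ^ 2 + (R (-2) + R 0) ^ 2
            + 4 * R 0 ^ 2) / 4)) :=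
  rcirculant_tribonacci_specNorm_bounds_small_r_general R hrec n r hr A hA
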